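/- Let D and E be real M×N matrices with M ≥ 1, let the columns of D be linearly independent (v ↦ D·v injective), set D⁺ = (DᵀD)⁻¹·Dᵀ, let F, u ∈ ℝ^M, û ∈ ℝ^N, and let u_h ∈ ℝ^N minimize v ↦ ‖D·v − F‖₂. Suppose there exist nonnegative constants C_D, C_E, S and h > 0 and an integer p ≥ 1 such that the consistency bound ‖F − D·û‖₂ ≤ C_D·h^{p−1}·S and the interpolation bound ‖u − E·û‖_∞ ≤ C_E·h^{p+1}·S hold. Then the error satisfies ‖u − E·u_h‖_{ℓ2} ≤ (1/√M)·‖E‖₂·‖D⁺‖₂·C_D·h^{p−1}·S + C_E·h^{p+1}·S. -/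

import Mathlib

/-!
The normal equations `Dᵀ (D u_h - F) = 0` of the least-squares problem give
`û - u_h = D⁺ (D û - F)`, hence `‖E (û - u_h)‖₂ ≤ ‖E‖₂ ‖D⁺‖₂ ‖F - D û‖₂`. The error splits as
`u - E u_h = (u - E û) + E (û - u_h)`, and the Euclidean norm of `u - E û` is at most `√M` times
its sup norm.
-/

open Matrix Finset

/-- The operator (spectral) norm of a real rectangular matrix, induced by the
Euclidean vector norms: `‖A‖₂ = sup_{x ≠ 0} ‖A·x‖₂ / ‖x‖₂`. -/
noncomputable def opSpectralNorm {M N : ℕ} (A : Matrix (Fin M) (Fin N) ℝ) : ℝ :=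
  ‖(Matrix.toEuclideanLin A).toContinuousLinearMap‖

open WithLp

theorem real_inner_eq_zero_of_forall_norm_le_norm_add_smul {F : Type*} [NormedAddCommGroup F]
    [InnerProductSpace ℝ F] {a w : F} (h : ∀ t : ℝ, ‖a‖ ≤ ‖a + t • w‖) : inner ℝ a w = 0 := by
  have hquad : ∀ t : ℝ, 0 ≤ ‖w‖ ^ 2 * (t * t) + 2 * inner ℝ a w * t + 0 := fun t => by
    have := pow_le_pow_left₀ (norm_nonneg _) (h t) 2
    rw [norm_add_sq_real, real_inner_smul_right, norm_smul, mul_pow, Real.norm_eq_abs,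
      sq_abs] at this
    nlinarith
  -- a nonnegative quadratic without constant term has discriminant `4 ⟪a, w⟫² ≤ 0`
  have := discrim_le_zero hquad
  rw [discrim] at this
  nlinarith [sq_nonneg (inner ℝ a w)]

theorem EuclideanSpace.norm_toLp_eq_sqrt_sum_sq {ι : Type*} [Fintype ι] (x : ι → ℝ) :
    ‖toLp 2 x‖ = √(∑ i, x i ^ 2) := by
  simp [EuclideanSpace.norm_eq]

theorem EuclideanSpace.norm_toLp_le_sqrt_card_mul_norm {𝕜 ι : Type*} [RCLike 𝕜] [Fintype ι]
    (x : ι → 𝕜) : ‖toLp 2 x‖ ≤ √(Fintype.card ι) * ‖x‖ := by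
  rw [EuclideanSpace.norm_eq, ← Real.sqrt_sq (norm_nonneg x), ← Real.sqrt_mul (Nat.cast_nonneg _)]
  gcongr
  calc ∑ i, ‖(toLp 2 x) i‖ ^ 2 ≤ ∑ _i : ι, ‖x‖ ^ 2 :=
        sum_le_sum fun i _ => pow_le_pow_left₀ (norm_nonneg _) (norm_le_pi_norm x i) 2
    _ = Fintype.card ι * ‖x‖ ^ 2 := by simp

namespace Matrix

variable {m n : Type*} [Fintype m] [Fintype n]

def IsLeastSquaresSolution (D : Matrix m n ℝ) (F : m → ℝ) (x : n → ℝ) : Prop :=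
  ∀ v, ‖toLp 2 (D *ᵥ x - F)‖ ≤ ‖toLp 2 (D *ᵥ v - F)‖

theorem IsLeastSquaresSolution.transpose_mulVec_residual_eq_zero {D : Matrix m n ℝ} {F : m → ℝ}
    {x : n → ℝ} (h : D.IsLeastSquaresSolution F x) : Dᵀ *ᵥ (D *ᵥ x - F) = 0 := by
  set r := D *ᵥ x - F
  have horth : ∀ w, r ⬝ᵥ (D *ᵥ w) = 0 := fun w => by
    have := real_inner_eq_zero_of_forall_norm_le_norm_add_smul
      (a := toLp 2 r) (w := toLp 2 (D *ᵥ w)) fun t => by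
        have e : toLp 2 (D *ᵥ (x + t • w) - F) = toLp 2 r + t • toLp 2 (D *ᵥ w) := by
          rw [← toLp_smul, ← toLp_add, mulVec_add, mulVec_smul]
          congr 1
          simp only [r]
          abel
        simpa only [e] using h (x + t • w)
    simpa [EuclideanSpace.inner_toLp_toLp, dotProduct_comm] using this
  have := horth (Dᵀ *ᵥ r)
  rwa [dotProduct_mulVec, ← mulVec_transpose, dotProduct_self_eq_zero] at this

theorem isUnit_transpose_mul_self_of_injective [DecidableEq n] {D : Matrix m n ℝ}
    (hD : Function.Injective D.mulVec) : IsUnit (Dᵀ * D) := by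
  have hker : LinearMap.ker (Dᵀ * D).mulVecLin = ⊥ := by
    rw [ker_mulVecLin_transpose_mul_self]
    exact LinearMap.ker_eq_bot.mpr hD
  exact mulVec_injective_iff_isUnit.mp (LinearMap.ker_eq_bot.mp hker)

theorem IsLeastSquaresSolution.sub_eq_pinv_mulVec [DecidableEq n] {D : Matrix m n ℝ} {F : m → ℝ}
    {x : n → ℝ} (h : D.IsLeastSquaresSolution F x) (hD : Function.Injective D.mulVec)
    (y : n → ℝ) : y - x = ((Dᵀ * D)⁻¹ * Dᵀ) *ᵥ (D *ᵥ y - F) := by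
  have hsplit : D *ᵥ y - F = D *ᵥ (y - x) + (D *ᵥ x - F) := by
    rw [mulVec_sub]; abel
  rw [hsplit, ← mulVec_mulVec, mulVec_add, h.transpose_mulVec_residual_eq_zero, add_zero,
    mulVec_mulVec, mulVec_mulVec, Matrix.mul_assoc,
    nonsing_inv_mul _ ((isUnit_transpose_mul_self_of_injective hD).map detMonoidHom), one_mulVec]

end Matrix

theorem opSpectralNorm_nonneg {k l : ℕ} (A : Matrix (Fin k) (Fin l) ℝ) : 0 ≤ opSpectralNorm A :=
  norm_nonneg _

theorem norm_toLp_mulVec_le {k l : ℕ} (A : Matrix (Fin k) (Fin l) ℝ) (x : Fin l → ℝ) :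
    ‖toLp 2 (A *ᵥ x)‖ ≤ opSpectralNorm A * ‖toLp 2 x‖ :=
  (toEuclideanLin A).toContinuousLinearMap.le_opNorm (toLp 2 x)

theorem Matrix.IsLeastSquaresSolution.norm_sub_mulVec_le {M N : ℕ} {D : Matrix (Fin M) (Fin N) ℝ}
    {F : Fin M → ℝ} {x : Fin N → ℝ} (h : D.IsLeastSquaresSolution F x)
    (hD : Function.Injective D.mulVec) (E : Matrix (Fin M) (Fin N) ℝ) (u : Fin M → ℝ)
    (y : Fin N → ℝ) :
    ‖toLp 2 (u - E *ᵥ x)‖ ≤ opSpectralNorm E * opSpectralNorm ((Dᵀ * D)⁻¹ * Dᵀ) *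
      ‖toLp 2 (F - D *ᵥ y)‖ + ‖toLp 2 (u - E *ᵥ y)‖ := by
  have hsplit : u - E *ᵥ x = E *ᵥ (y - x) + (u - E *ᵥ y) := by
    rw [mulVec_sub]; abel
  have hEsub : ‖toLp 2 (E *ᵥ (y - x))‖ ≤
      opSpectralNorm E * (opSpectralNorm ((Dᵀ * D)⁻¹ * Dᵀ) * ‖toLp 2 (F - D *ᵥ y)‖) := by
    refine (norm_toLp_mulVec_le E _).trans
      (mul_le_mul_of_nonneg_left ?_ (opSpectralNorm_nonneg E))
    rw [h.sub_eq_pinv_mulVec hD y, ← neg_sub F, mulVec_neg, toLp_neg, norm_neg]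
    exact norm_toLp_mulVec_le _ _
  rw [hsplit, toLp_add, mul_assoc]
  exact (norm_add_le _ _).trans (by gcongr)

theorem lsq_pde_error_estimate_general
    (M N : ℕ) (hM : 1 ≤ M) (D E : Matrix (Fin M) (Fin N) ℝ)
    (F u : Fin M → ℝ) (uhat : Fin N → ℝ) (uh : Fin N → ℝ)
    (hinj : Function.Injective D.mulVec)
    (hmin : ∀ v : Fin N → ℝ,
      Real.sqrt (∑ i, (D.mulVec uh - F) i ^ 2) ≤
        Real.sqrt (∑ i, (D.mulVec v - F) i ^ 2))
    (CD CE S : ℝ)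
    (h : ℝ) (p : ℕ)
    (hconsistency :
      Real.sqrt (∑ i, (F - D.mulVec uhat) i ^ 2) ≤ CD * h ^ (p - 1) * S)
    (hinterp : ∀ i, |u i - E.mulVec uhat i| ≤ CE * h ^ (p + 1) * S) :
    (1 / Real.sqrt M) * Real.sqrt (∑ i, (u i - E.mulVec uh i) ^ 2) ≤
      (1 / Real.sqrt M) * opSpectralNorm E * opSpectralNorm ((Dᵀ * D)⁻¹ * Dᵀ) *
        (CD * h ^ (p - 1) * S) + CE * h ^ (p + 1) * S := by
  simp only [← EuclideanSpace.norm_toLp_eq_sqrt_sum_sq] at hmin hconsistency ⊢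
  have : Nonempty (Fin M) := ⟨⟨0, hM⟩⟩
  have hsqrtM : 0 < √(M : ℝ) := Real.sqrt_pos.mpr (by exact_mod_cast hM)
  have hinterp₂ : ‖toLp 2 (u - E *ᵥ uhat)‖ ≤ √M * (CE * h ^ (p + 1) * S) := by
    refine (EuclideanSpace.norm_toLp_le_sqrt_card_mul_norm _).trans ?_
    rw [Fintype.card_fin]
    exact mul_le_mul_of_nonneg_left ((pi_norm_le_iff_of_nonempty _).mpr hinterp) hsqrtM.le
  calc 1 / √M * ‖toLp 2 (u - E *ᵥ uh)‖
      ≤ 1 / √M * (opSpectralNorm E * opSpectralNorm ((Dᵀ * D)⁻¹ * Dᵀ) *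
          (CD * h ^ (p - 1) * S) + √M * (CE * h ^ (p + 1) * S)) := by
        gcongr
        refine (IsLeastSquaresSolution.norm_sub_mulVec_le hmin hinj E u uhat).trans ?_
        gcongr
        exact mul_nonneg (opSpectralNorm_nonneg _) (opSpectralNorm_nonneg _)
    _ = _ := by field_simp

/-- **The final PDE error estimate.**
If the columns of `D` are independent, `D⁺ = (DᵀD)⁻¹·Dᵀ`, `u_h` minimizes
`v ↦ ‖D·v − F‖₂`, and the consistency bound `‖F − D·û‖₂ ≤ C_D·h^(p−1)·S` and
interpolation bound `‖u − E·û‖_∞ ≤ C_E·h^(p+1)·S` hold, then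
`‖u − E·u_h‖_{ℓ2} ≤ (1/√M)·‖E‖₂·‖D⁺‖₂·C_D·h^(p−1)·S + C_E·h^(p+1)·S`. -/
theorem lsq_pde_error_estimate
    (M N : ℕ) (hM : 1 ≤ M) (D E : Matrix (Fin M) (Fin N) ℝ)
    (F u : Fin M → ℝ) (uhat : Fin N → ℝ) (uh : Fin N → ℝ)
    (hinj : Function.Injective D.mulVec)
    (hmin : ∀ v : Fin N → ℝ,
      Real.sqrt (∑ i, (D.mulVec uh - F) i ^ 2) ≤
        Real.sqrt (∑ i, (D.mulVec v - F) i ^ 2))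
    (CD CE S : ℝ) (hCD : 0 ≤ CD) (hCE : 0 ≤ CE) (hS : 0 ≤ S)
    (h : ℝ) (hh : 0 < h) (p : ℕ) (hp : 1 ≤ p)
    (hconsistency :
      Real.sqrt (∑ i, (F - D.mulVec uhat) i ^ 2) ≤ CD * h ^ (p - 1) * S)
    (hinterp : ∀ i, |u i - E.mulVec uhat i| ≤ CE * h ^ (p + 1) * S) :
    (1 / Real.sqrt M) * Real.sqrt (∑ i, (u i - E.mulVec uh i) ^ 2) ≤
      (1 / Real.sqrt M) * opSpectralNorm E * opSpectralNorm ((Dᵀ * D)⁻¹ * Dᵀ) *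
        (CD * h ^ (p - 1) * S) + CE * h ^ (p + 1) * S :=
  lsq_pde_error_estimate_general M N hM D E F u uhat uh hinj hmin CD CE S h p hconsistency hinterp
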